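/- For the contracted radius gadget (G',w'): if F'(x,y)=1 then R_{G',w'} ≤ max{2α, β}, and if F'(x,y)=0 then R_{G',w'} ≥ min{α+β, 3α}. -/

import Mathlib

/-
If `x i₀ j₀ = y i₀ j₀ = 1`, the vertex `a_{i₀}` reaches every vertex within `max{2α, β}`: the
`a_i`, the `a^z_j` on its side and `a*_j` directly, `b_{i₀}` and `t` through `a*_{j₀}`, every other
`b_i` through a bit position where `i` and `i₀` differ, and the remaining `a^z_j` through a
suitable `a_i`.

For the lower bound, distances are bounded below by potentials `φ` with `φ p ≤ φ q + w(p,q)`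
along every edge: every vertex other than `a_0` and the `a_i` is at distance at least `3α` from
`a_0`, `a_0` is at distance `3α` from `t`, and without a common `1` in row `i` of `x` and `y`
every path from `a_i` to `b_i` costs at least `min{α + β, 3α}`.
-/

open scoped ENNReal

set_option linter.unusedVariables false

/-- The length of a walk with respect to `ℝ≥0∞` edge weights. -/
noncomputable def wlen {V : Type*} (G : SimpleGraph V) (w : V → V → ℝ≥0∞) {u v : V}
    (p : G.Walk u v) : ℝ≥0∞ :=
  (p.darts.map fun d => w d.toProd.1 d.toProd.2).sum

/-- The weighted distance: the infimum of walk lengths. -/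
noncomputable def wdist {V : Type*} (G : SimpleGraph V) (w : V → V → ℝ≥0∞) (u v : V) : ℝ≥0∞ :=
  ⨅ p : G.Walk u v, wlen G w p

/-- Eccentricity `e_{G,w}(u) = max_v d_{G,w}(u,v)`. -/
noncomputable def wecc {V : Type*} (G : SimpleGraph V) (w : V → V → ℝ≥0∞) (u : V) : ℝ≥0∞ :=
  ⨆ v, wdist G w u v

/-- Weighted radius `R_{G,w} = min_u e_{G,w}(u)`. -/
noncomputable def wrad {V : Type*} (G : SimpleGraph V) (w : V → V → ℝ≥0∞) : ℝ≥0∞ :=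
  ⨅ u, wecc G w u

/-- Vertices of the contracted radius gadget. -/
inductive CRV (s ℓ : ℕ) where
  /-- the hub `t` -/
  | t
  /-- the extra node `a_0` -/
  | a0
  /-- node `a^z_{j+1}` -/
  | ah (z : Bool) (j : Fin s)
  /-- node `a*_{j+1}` -/
  | as (j : Fin ℓ)
  /-- node `a_{i+1}` -/
  | a (i : Fin (2 ^ s))
  /-- node `b_{i+1}` -/
  | b (i : Fin (2 ^ s))
  deriving DecidableEq, Fintype

/-- Base (oriented) adjacency of the contracted radius gadget.  Here `bin(i,j)` is
realized as `Nat.testBit` on the 0-based index, and `bin(i,j)⊕1` as its negation. -/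
def crAdj0 {s ℓ : ℕ} : CRV s ℓ → CRV s ℓ → Prop
  | .t, .ah _ _ => True
  | .t, .as _ => True
  | .a i, .ah z j => z = i.val.testBit j.val
  | .b i, .ah z j => z = !(i.val.testBit j.val)
  | .a i, .a i' => i ≠ i'
  | .b i, .b i' => i ≠ i'
  | .a _, .as _ => True
  | .b _, .as _ => True
  | .a0, .a _ => True
  | _, _ => False

/-- The contracted radius gadget graph. -/
def crGadget (s ℓ : ℕ) : SimpleGraph (CRV s ℓ) where
  Adj u v := u ≠ v ∧ (crAdj0 u v ∨ crAdj0 v u)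
  symm := ⟨fun u v huv => ⟨huv.1.symm, huv.2.symm⟩⟩
  loopless := ⟨fun u hu => hu.1 rfl⟩

/-- The weights of the contracted radius gadget: every edge has weight `α`, except
`a_i`–`a*_j` which has weight `α` if `x_{i,j}=1` and `β` otherwise, `b_i`–`a*_j` which
has weight `α` if `y_{i,j}=1` and `β` otherwise, and `a_0`–`a_i` which has weight `2α`. -/
def crW {s ℓ : ℕ} (x y : Fin (2 ^ s) → Fin ℓ → Bool) (α β : ℕ) : CRV s ℓ → CRV s ℓ → ℕ
  | .a i, .as j => if x i j then α else β
  | .as j, .a i => if x i j then α else β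
  | .b i, .as j => if y i j then α else β
  | .as j, .b i => if y i j then α else β
  | .a0, .a _ => 2 * α
  | .a _, .a0 => 2 * α
  | _, _ => α

section WeightedDistance

variable {V : Type*} (G : SimpleGraph V) (w : V → V → ℝ≥0∞)

@[simp]
lemma wlen_nil (u : V) : wlen G w (SimpleGraph.Walk.nil : G.Walk u u) = 0 := rfl

@[simp]
lemma wlen_cons {u c v : V} (h : G.Adj u c) (p : G.Walk c v) :
    wlen G w (.cons h p) = w u c + wlen G w p := by
  simp [wlen]

lemma wdist_le_wlen {u v : V} (p : G.Walk u v) : wdist G w u v ≤ wlen G w p :=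
  iInf_le _ p

lemma wdist_self (u : V) : wdist G w u u = 0 :=
  nonpos_iff_eq_zero.mp (wdist_le_wlen G w .nil)

lemma le_add_wlen_of_potential (φ : V → ℝ≥0∞) (hφ : ∀ p q, G.Adj p q → φ p ≤ φ q + w p q)
    {u v : V} (p : G.Walk u v) : φ u ≤ φ v + wlen G w p := by
  induction p with
  | nil => simp
  | @cons a b c h p ih =>
    calc φ a ≤ φ b + w a b := hφ _ _ h
      _ ≤ φ c + wlen G w p + w a b := by gcongr
      _ = φ c + wlen G w (.cons h p) := by rw [wlen_cons]; ring

lemma wrad_le_of_forall_wdist_le {r : ℝ≥0∞} (u : V) (h : ∀ v, wdist G w u v ≤ r) :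
    wrad G w ≤ r :=
  (iInf_le _ u).trans (iSup_le h)

lemma le_wrad_of_forall_exists_le_wdist {r : ℝ≥0∞} (h : ∀ u, ∃ v, r ≤ wdist G w u v) :
    r ≤ wrad G w :=
  le_iInf fun u => let ⟨v, hv⟩ := h u; hv.trans (le_iSup _ v)

end WeightedDistance

section NatWeights

variable {V : Type*} (G : SimpleGraph V) (w : V → V → ℕ)

lemma wdist_le_of_adj_of_le {u v : V} {r : ℕ} (h : G.Adj u v) (hr : w u v ≤ r) :
    wdist G (fun p q => (w p q : ℝ≥0∞)) u v ≤ r :=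
  (wdist_le_wlen _ _ (.cons h .nil)).trans (by simpa using hr)

lemma wdist_le_of_adj_of_adj_of_le {u c v : V} {r : ℕ} (h₁ : G.Adj u c)
    (h₂ : G.Adj c v) (hr : w u c + w c v ≤ r) : wdist G (fun p q => (w p q : ℝ≥0∞)) u v ≤ r :=
  (wdist_le_wlen _ _ (.cons h₁ (.cons h₂ .nil))).trans <| by
    simpa using (Nat.cast_le (α := ℝ≥0∞)).mpr hr

lemma natCast_le_wdist_of_potential (φ : V → ℕ)
    (hφ : ∀ p q, G.Adj p q → φ p ≤ φ q + w p q) {u v : V} (hv : φ v = 0) :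
    (φ u : ℝ≥0∞) ≤ wdist G (fun p q => (w p q : ℝ≥0∞)) u v := by
  refine le_iInf fun p => ?_
  have := le_add_wlen_of_potential G (fun p q => (w p q : ℝ≥0∞)) (fun p => (φ p : ℝ≥0∞))
    (fun p q h => by exact_mod_cast hφ p q h) p
  simpa [hv] using this

end NatWeights

lemma exists_fin_two_pow_testBit_eq {s : ℕ} (j : Fin s) (z : Bool) :
    ∃ i : Fin (2 ^ s), i.val.testBit j = z := by
  cases z
  · exact ⟨⟨0, Nat.two_pow_pos s⟩, Nat.zero_testBit _⟩
  · exact ⟨⟨2 ^ (j : ℕ), Nat.pow_lt_pow_right one_lt_two j.isLt⟩, Nat.testBit_two_pow_self⟩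

lemma Fin.exists_testBit_ne_of_ne {s : ℕ} {i i' : Fin (2 ^ s)} (h : i ≠ i') :
    ∃ j : Fin s, i.val.testBit j ≠ i'.val.testBit j := by
  obtain ⟨j, hj⟩ := Nat.exists_testBit_ne_of_ne (Fin.val_ne_of_ne h)
  refine ⟨⟨j, lt_of_not_ge fun hsj => hj ?_⟩, hj⟩
  have hpow := Nat.pow_le_pow_right two_pos hsj
  rw [Nat.testBit_lt_two_pow (i.isLt.trans_le hpow),
    Nat.testBit_lt_two_pow (i'.isLt.trans_le hpow)]

section Gadget

variable {s ℓ : ℕ} {x y : Fin (2 ^ s) → Fin ℓ → Bool} {α β : ℕ}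

@[simp]
lemma crGadget_adj {p q : CRV s ℓ} :
    (crGadget s ℓ).Adj p q ↔ p ≠ q ∧ (crAdj0 p q ∨ crAdj0 q p) :=
  Iff.rfl

lemma wdist_a_le_of_common_one {i₀ : Fin (2 ^ s)} {j₀ : Fin ℓ} (hx : x i₀ j₀ = true)
    (hy : y i₀ j₀ = true) (v : CRV s ℓ) :
    wdist (crGadget s ℓ) (fun p q => ((crW x y α β p q : ℕ) : ℝ≥0∞)) (.a i₀) v ≤
      ((max (2 * α) β : ℕ) : ℝ≥0∞) := by
  cases v with
  | t =>
    exact wdist_le_of_adj_of_adj_of_le _ _ (c := .as j₀) (by simp [crAdj0])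
      (by simp [crAdj0]) (by simp only [crW, hx, if_true]; omega)
  | a0 => exact wdist_le_of_adj_of_le _ _ (by simp [crAdj0]) (by simp only [crW]; omega)
  | ah z j =>
    by_cases hz : z = i₀.val.testBit j
    · exact wdist_le_of_adj_of_le _ _ (by simp [crAdj0, hz]) (by simp only [crW]; omega)
    · obtain ⟨i, hi⟩ := exists_fin_two_pow_testBit_eq j z
      have hne : i₀ ≠ i := by rintro rfl; exact hz hi.symm
      exact wdist_le_of_adj_of_adj_of_le _ _ (c := .a i) (by simp [crAdj0, hne])
        (by simp [crAdj0, hi]) (by simp only [crW]; omega)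
  | as j =>
    exact wdist_le_of_adj_of_le _ _ (by simp [crAdj0])
      (by simp only [crW]; split_ifs <;> omega)
  | a i =>
    by_cases hi : i₀ = i
    · subst hi; simp [wdist_self]
    · exact wdist_le_of_adj_of_le _ _ (by simp [crAdj0, hi]) (by simp only [crW]; omega)
  | b i =>
    by_cases hi : i = i₀
    · subst hi
      exact wdist_le_of_adj_of_adj_of_le _ _ (c := .as j₀) (by simp [crAdj0])
        (by simp [crAdj0]) (by simp only [crW, hx, hy, if_true]; omega)
    · obtain ⟨j, hj⟩ := Fin.exists_testBit_ne_of_ne hi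
      exact wdist_le_of_adj_of_adj_of_le _ _ (c := .ah (i₀.val.testBit j) j)
        (by simp [crAdj0]) (by simp [crAdj0, Bool.eq_not_of_ne hj.symm])
        (by simp only [crW]; omega)

def crPotA0 (α : ℕ) : CRV s ℓ → ℕ
  | .a0 => 0
  | .a _ => 2 * α
  | _ => 3 * α

def crPotT (α : ℕ) : CRV s ℓ → ℕ
  | .t => 0
  | .a0 => 3 * α
  | .a _ | .b _ => 2 * α
  | _ => α

def crPotB (i₀ : Fin (2 ^ s)) (y : Fin (2 ^ s) → Fin ℓ → Bool) (α β : ℕ) : CRV s ℓ → ℕ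
  | .b i => if i = i₀ then 0 else α
  | .a i => if i = i₀ then min (α + β) (3 * α) else min β (2 * α)
  | .ah z j => if z = !(i₀.val.testBit j) then α else min β (2 * α)
  | .as j => if y i₀ j then α else min β (2 * α)
  | .t => 2 * α
  | .a0 => α

lemma crPotA0_le_add_crW (hαβ : α ≤ β) (p q : CRV s ℓ) (h : (crGadget s ℓ).Adj p q) :
    crPotA0 α p ≤ crPotA0 α q + crW x y α β p q := by
  obtain ⟨-, hadj⟩ := h
  cases p <;> cases q <;> simp only [crAdj0, or_self] at hadj <;>
    simp only [crPotA0, crW] <;> (try split_ifs) <;> omega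

lemma crPotT_le_add_crW (hαβ : α ≤ β) (p q : CRV s ℓ) (h : (crGadget s ℓ).Adj p q) :
    crPotT α p ≤ crPotT α q + crW x y α β p q := by
  obtain ⟨-, hadj⟩ := h
  cases p <;> cases q <;> simp only [crAdj0, or_self] at hadj <;>
    simp only [crPotT, crW] <;> (try split_ifs) <;> omega

lemma crPotB_le_add_crW (hαβ : α ≤ β) {i₀ : Fin (2 ^ s)}
    (hxy : ∀ j, ¬(x i₀ j = true ∧ y i₀ j = true)) (p q : CRV s ℓ)
    (h : (crGadget s ℓ).Adj p q) :
    crPotB i₀ y α β p ≤ crPotB i₀ y α β q + crW x y α β p q := by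
  obtain ⟨-, hadj⟩ := h
  cases p <;> cases q <;> simp only [crAdj0, or_self] at hadj <;>
    simp only [crPotB, crW] <;> (try split_ifs) <;> try omega
  -- the remaining edges contradict `hxy` or the bit condition defining them
  all_goals simp_all

lemma exists_le_wdist_of_no_common_one (hαβ : α ≤ β)
    (hxy : ¬∃ i j, x i j = true ∧ y i j = true) (u : CRV s ℓ) :
    ∃ v, ((min (α + β) (3 * α) : ℕ) : ℝ≥0∞) ≤
      wdist (crGadget s ℓ) (fun p q => ((crW x y α β p q : ℕ) : ℝ≥0∞)) u v := by
  cases u with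
  | a i =>
    refine ⟨.b i, (Nat.cast_le.mpr ?_).trans (natCast_le_wdist_of_potential _ _ _
      (crPotB_le_add_crW hαβ fun j hj => hxy ⟨i, j, hj⟩) (v := .b i) (by simp [crPotB]))⟩
    simp [crPotB]
  | a0 =>
    exact ⟨.t, (Nat.cast_le.mpr (by simp only [crPotT]; omega)).trans
      (natCast_le_wdist_of_potential _ _ _ (crPotT_le_add_crW hαβ) rfl)⟩
  | _ =>
    exact ⟨.a0, (Nat.cast_le.mpr (by simp only [crPotA0]; omega)).trans
      (natCast_le_wdist_of_potential _ _ _ (crPotA0_le_add_crW hαβ) rfl)⟩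

end Gadget

theorem stmt9_general (s ℓ : ℕ)
    (α β : ℕ) (hαβ : α ≤ β)
    (x y : Fin (2 ^ s) → Fin ℓ → Bool) :
    ((∃ (i : Fin (2 ^ s)) (j : Fin ℓ), x i j = true ∧ y i j = true) →
      wrad (crGadget s ℓ) (fun p q => ((crW x y α β p q : ℕ) : ℝ≥0∞)) ≤
        ((max (2 * α) β : ℕ) : ℝ≥0∞)) ∧
    ((¬ ∃ (i : Fin (2 ^ s)) (j : Fin ℓ), x i j = true ∧ y i j = true) →
      ((min (α + β) (3 * α) : ℕ) : ℝ≥0∞) ≤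
        wrad (crGadget s ℓ) (fun p q => ((crW x y α β p q : ℕ) : ℝ≥0∞))) := by
  refine ⟨fun ⟨i, j, hx, hy⟩ => ?_, fun hxy => ?_⟩
  · exact wrad_le_of_forall_wdist_le _ _ (.a i) (wdist_a_le_of_common_one hx hy)
  · exact le_wrad_of_forall_exists_le_wdist _ _ (exists_le_wdist_of_no_common_one hαβ hxy)

/-- For the contracted radius gadget `(G',w')`: if `F'(x,y)=1` then
`R_{G',w'} ≤ max{2α, β}`, and if `F'(x,y)=0` then `R_{G',w'} ≥ min{α+β, 3α}`, where
`F'(x,y) = ⋁_{i,j} (x_{i,j} ∧ y_{i,j})`. -/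
theorem stmt9 (s ℓ : ℕ) (hs : 1 ≤ s) (hℓ : 1 ≤ ℓ)
    (α β : ℕ) (hα : 0 < α) (hαβ : α ≤ β)
    (x y : Fin (2 ^ s) → Fin ℓ → Bool) :
    ((∃ (i : Fin (2 ^ s)) (j : Fin ℓ), x i j = true ∧ y i j = true) →
      wrad (crGadget s ℓ) (fun p q => ((crW x y α β p q : ℕ) : ℝ≥0∞)) ≤
        ((max (2 * α) β : ℕ) : ℝ≥0∞)) ∧
    ((¬ ∃ (i : Fin (2 ^ s)) (j : Fin ℓ), x i j = true ∧ y i j = true) →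
      ((min (α + β) (3 * α) : ℕ) : ℝ≥0∞) ≤
        wrad (crGadget s ℓ) (fun p q => ((crW x y α β p q : ℕ) : ℝ≥0∞))) :=
  stmt9_general s ℓ α β hαβ x y
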